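/- arXiv:1509.08024 — 5 statements merged into one kernel-verified Lean document; each statement's English description precedes it below -/
import Mathlib

section
/- Let T : H₁ → H₂ be densely defined with characteristic projection E. Then T is closable if and only if ker(I - E₂₂) = {0}, i.e., for every ψ ∈ H₂, E₂₂ψ = ψ implies ψ = 0. -/
/-! Closability means that no `(0, ψ)` with `ψ ≠ 0` lies in the closure of the graph. As `E` is
the orthogonal projection onto that closure, `(0, ψ)` lies in it iff `E (0, ψ) = (0, ψ)`, and
`E₂₂ ψ = ψ` already forces this: then `(0, ψ) - E (0, ψ)` has vanishing second component, so it
is orthogonal to `(0, ψ)` as well as to `E (0, ψ)`, hence zero. -/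

section CharProj

variable {H₁ H₂ : Type*}
  [NormedAddCommGroup H₁] [InnerProductSpace ℂ H₁] [CompleteSpace H₁]
  [NormedAddCommGroup H₂] [InnerProductSpace ℂ H₂] [CompleteSpace H₂]

/-- The Hilbert space `H₁ ⊕ H₂` (with the ℓ²-sum inner product), as `WithLp 2 (H₁ × H₂)`,
and the canonical identification. -/
noncomputable def toL2 : (H₁ × H₂) ≃ₗ[ℂ] WithLp 2 (H₁ × H₂) :=
  (WithLp.linearEquiv 2 ℂ (H₁ × H₂)).symm

/-- The graph of `T`, viewed inside the Hilbert space `H₁ ⊕ H₂`. -/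
noncomputable def graphL2 (T : H₁ →ₗ.[ℂ] H₂) : Submodule ℂ (WithLp 2 (H₁ × H₂)) :=
  T.graph.map (toL2 : (H₁ × H₂) ≃ₗ[ℂ] WithLp 2 (H₁ × H₂)).toLinearMap

/-- `E` is the characteristic projection of `T`: the orthogonal projection of `H₁ ⊕ H₂`
onto the closure of the graph of `T` (every value lies in the closure of the graph, and the
residual is orthogonal to it). -/
noncomputable def IsCharProj (T : H₁ →ₗ.[ℂ] H₂)
    (E : WithLp 2 (H₁ × H₂) →L[ℂ] WithLp 2 (H₁ × H₂)) : Prop :=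
  ∀ v, E v ∈ (graphL2 T).topologicalClosure ∧
    ∀ w ∈ (graphL2 T).topologicalClosure, (inner ℂ (v - E v) w : ℂ) = 0

/-- Block components `E_ij : H_j → H_i` of an operator on `H₁ ⊕ H₂`. -/
noncomputable def Eb11 (E : WithLp 2 (H₁ × H₂) →L[ℂ] WithLp 2 (H₁ × H₂)) (x : H₁) : H₁ :=
  ((WithLp.equiv 2 (H₁ × H₂)) (E (toL2 (x, 0)))).1

noncomputable def Eb21 (E : WithLp 2 (H₁ × H₂) →L[ℂ] WithLp 2 (H₁ × H₂)) (x : H₁) : H₂ :=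
  ((WithLp.equiv 2 (H₁ × H₂)) (E (toL2 (x, 0)))).2

noncomputable def Eb12 (E : WithLp 2 (H₁ × H₂) →L[ℂ] WithLp 2 (H₁ × H₂)) (ψ : H₂) : H₁ :=
  ((WithLp.equiv 2 (H₁ × H₂)) (E (toL2 (0, ψ)))).1

noncomputable def Eb22 (E : WithLp 2 (H₁ × H₂) →L[ℂ] WithLp 2 (H₁ × H₂)) (ψ : H₂) : H₂ :=
  ((WithLp.equiv 2 (H₁ × H₂)) (E (toL2 (0, ψ)))).2

def IsOrthProjOnto {𝕜 F : Type*} [RCLike 𝕜] [NormedAddCommGroup F] [InnerProductSpace 𝕜 F]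
    (K : Submodule 𝕜 F) (P : F → F) : Prop :=
  ∀ v, P v ∈ K ∧ ∀ w ∈ K, (inner 𝕜 (v - P v) w : 𝕜) = 0

namespace IsOrthProjOnto

variable {𝕜 : Type*} [RCLike 𝕜]

section

variable {F : Type*} [NormedAddCommGroup F] [InnerProductSpace 𝕜 F]
  {K : Submodule 𝕜 F} {P : F → F}

theorem apply_eq_self_of_inner_sub_apply_self_eq_zero (hP : IsOrthProjOnto K P) {v : F}
    (hv : (inner 𝕜 (v - P v) v : 𝕜) = 0) : P v = v := by
  have h : (inner 𝕜 (v - P v) (v - P v) : 𝕜) = 0 := by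
    rw [inner_sub_right, hv, (hP v).2 _ (hP v).1, sub_zero]
  exact (sub_eq_zero.1 (inner_self_eq_zero.1 h)).symm

theorem mem_iff_apply_eq_self (hP : IsOrthProjOnto K P) {v : F} : v ∈ K ↔ P v = v :=
  ⟨fun hv => hP.apply_eq_self_of_inner_sub_apply_self_eq_zero ((hP v).2 v hv),
    fun h => h ▸ (hP v).1⟩

end

variable {E F : Type*} [NormedAddCommGroup E] [InnerProductSpace 𝕜 E]
  [NormedAddCommGroup F] [InnerProductSpace 𝕜 F]
  {K : Submodule 𝕜 (WithLp 2 (E × F))} {P : WithLp 2 (E × F) → WithLp 2 (E × F)}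

theorem toLp_zero_mem_iff (hP : IsOrthProjOnto K P) {ψ : F} :
    WithLp.toLp 2 (0, ψ) ∈ K ↔ (P (WithLp.toLp 2 (0, ψ))).ofLp.2 = ψ := by
  rw [hP.mem_iff_apply_eq_self]
  refine ⟨fun h => by rw [h], fun h => hP.apply_eq_self_of_inner_sub_apply_self_eq_zero ?_⟩
  simp only [WithLp.prod_inner_apply, WithLp.ofLp_sub, Prod.snd_sub, h, sub_self,
    inner_zero_right, inner_zero_left, add_zero]

end IsOrthProjOnto

theorem ContinuousLinearEquiv.apply_mem_topologicalClosure_map_iff {R M N : Type*} [Semiring R]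
    [TopologicalSpace M] [AddCommMonoid M] [Module R M] [ContinuousAdd M]
    [ContinuousConstSMul R M] [TopologicalSpace N] [AddCommMonoid N] [Module R N]
    [ContinuousAdd N] [ContinuousConstSMul R N] (e : M ≃L[R] N) (s : Submodule R M) {x : M} :
    e x ∈ (s.map (e : M →ₗ[R] N)).topologicalClosure ↔ x ∈ s.topologicalClosure := by
  rw [← SetLike.mem_coe, Submodule.topologicalClosure_coe, Submodule.map_coe, LinearEquiv.coe_coe,
    ContinuousLinearEquiv.coe_toLinearEquiv, ← e.image_closure]
  exact e.injective.mem_set_image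

theorem LinearPMap.isClosable_iff_forall_zero_mem_closure_graph {R E F : Type*} [CommRing R]
    [AddCommGroup E] [AddCommGroup F] [Module R E] [Module R F] [TopologicalSpace E]
    [TopologicalSpace F] [ContinuousAdd E] [ContinuousAdd F] [TopologicalSpace R]
    [ContinuousSMul R E] [ContinuousSMul R F] (f : E →ₗ.[R] F) :
    f.IsClosable ↔ ∀ y : F, (0, y) ∈ f.graph.topologicalClosure → y = 0 := by
  refine ⟨fun ⟨g, hg⟩ y hy => g.graph_fst_eq_zero_snd (hg ▸ hy) rfl, fun h => ?_⟩
  refine ⟨f.graph.topologicalClosure.toLinearPMap, (Submodule.toLinearPMap_graph_eq _ ?_).symm⟩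
  rintro ⟨x, y⟩ hxy (rfl : x = 0)
  exact h y hxy

theorem stmt8_general (T : H₁ →ₗ.[ℂ] H₂)
    (E : WithLp 2 (H₁ × H₂) →L[ℂ] WithLp 2 (H₁ × H₂)) (hE : IsCharProj T E) :
    T.IsClosable ↔ ∀ ψ : H₂, Eb22 E ψ = ψ → ψ = 0 := by
  have hP : IsOrthProjOnto (graphL2 T).topologicalClosure E := hE
  rw [T.isClosable_iff_forall_zero_mem_closure_graph]
  refine forall_congr' fun ψ => imp_congr_left ?_
  rw [← (WithLp.prodContinuousLinearEquiv 2 ℂ H₁ H₂).symm.apply_mem_topologicalClosure_map_iff]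
  exact hP.toLp_zero_mem_iff

/-- a densely defined `T` with characteristic projection `E` is closable if and
only if `ker(I - E₂₂) = {0}`, i.e. `E₂₂ ψ = ψ` implies `ψ = 0`. -/
theorem stmt8 (T : H₁ →ₗ.[ℂ] H₂) (hdense : Dense (T.domain : Set H₁))
    (E : WithLp 2 (H₁ × H₂) →L[ℂ] WithLp 2 (H₁ × H₂)) (hE : IsCharProj T E) :
    T.IsClosable ↔ ∀ ψ : H₂, Eb22 E ψ = ψ → ψ = 0 :=
  stmt8_general T E hE

end CharProj
end

section
/- Let D ⊆ H₁ ∩ H₂, with D dense in H₁, and suppose there exists a selfadjoint operator Δ in H₁ with D ⊆ dom(Δ) and ⟨φ, Δφ⟩₁ = ‖φ‖₂² for all φ ∈ D. Then the set D* := {h ∈ H₂ : ∃C < ∞ with |⟨φ, h⟩₂| ≤ C‖φ‖₁ for all φ ∈ D} is dense in H₂. -/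
/-!
By complex polarization, the hypothesis on the diagonal gives `⟪j φ, j ψ⟫₂ = ⟪φ, Δ ψ⟫₁` for all
`φ ψ ∈ D`, so `|⟪j φ, j ψ + k⟫₂| ≤ ‖Δ ψ‖ ‖φ‖₁` whenever `k ⊥ j(D)`. Hence `D*` contains
`j(D) + j(D)ᗮ`, which is dense in `H₂` because its orthogonal complement is
`j(D)ᗮ ⊓ j(D)ᗮᗮ = 0`.
-/

open scoped InnerProductSpace

theorem LinearMap.apply_eq_zero_of_apply_self_eq_zero {E : Type*} [AddCommGroup E] [Module ℂ E]
    (B : E →ₗ⋆[ℂ] E →ₗ[ℂ] ℂ) (h : ∀ x, B x x = 0) (x y : E) : B x y = 0 := by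
  have h1 := h (x + y)
  have h2 := h (x - y)
  have h3 := h (x + Complex.I • y)
  have h4 := h (x - Complex.I • y)
  simp only [map_add, map_sub, map_smulₛₗ, LinearMap.add_apply, LinearMap.sub_apply,
    LinearMap.smul_apply, smul_eq_mul, Complex.conj_I,
    RingHom.id_apply] at h1 h2 h3 h4
  linear_combination (h1 - h2) / 4 - Complex.I * (h3 - h4) / 4 +
    (B x y / 2 - B y x / 2) * Complex.I_mul_I

theorem inner_eq_inner_of_inner_self_eq {V H₁ H₂ : Type*} [AddCommGroup V] [Module ℂ V]
    [NormedAddCommGroup H₁] [InnerProductSpace ℂ H₁]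
    [NormedAddCommGroup H₂] [InnerProductSpace ℂ H₂]
    (ι T : V →ₗ[ℂ] H₁) (j : V →ₗ[ℂ] H₂)
    (h : ∀ φ, ⟪ι φ, T φ⟫_ℂ = ((‖j φ‖ ^ 2 : ℝ) : ℂ)) (φ ψ : V) :
    ⟪j φ, j ψ⟫_ℂ = ⟪ι φ, T ψ⟫_ℂ := by
  have hB := LinearMap.apply_eq_zero_of_apply_self_eq_zero
    (((innerₛₗ ℂ).comp j).compl₂ j - ((innerₛₗ ℂ).comp ι).compl₂ T)
    (fun φ => by simp [h φ, inner_self_eq_norm_sq_to_K]) φ ψ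
  simpa [sub_eq_zero] using hB

theorem Submodule.dense_sup_orthogonal {𝕜 E : Type*} [RCLike 𝕜]
    [NormedAddCommGroup E] [InnerProductSpace 𝕜 E] [CompleteSpace E] (K : Submodule 𝕜 E) :
    Dense ((K ⊔ Kᗮ : Submodule 𝕜 E) : Set E) := by
  rw [Submodule.dense_iff_topologicalClosure_eq_top, Submodule.topologicalClosure_eq_top_iff,
    ← Submodule.inf_orthogonal]
  exact Kᗮ.inf_orthogonal_eq_bot

theorem sup_orthogonal_range_subset_of_inner_eq {𝕜 V H₁ H₂ : Type*} [RCLike 𝕜]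
    [AddCommGroup V] [Module 𝕜 V]
    [NormedAddCommGroup H₁] [InnerProductSpace 𝕜 H₁]
    [NormedAddCommGroup H₂] [InnerProductSpace 𝕜 H₂]
    (ι T : V → H₁) (j : V →ₗ[𝕜] H₂) (hT : ∀ φ ψ, ⟪j φ, j ψ⟫_𝕜 = ⟪ι φ, T ψ⟫_𝕜) :
    ((LinearMap.range j ⊔ (LinearMap.range j)ᗮ : Submodule 𝕜 H₂) : Set H₂) ⊆
      {h | ∃ C : ℝ, ∀ φ, ‖⟪j φ, h⟫_𝕜‖ ≤ C * ‖ι φ‖} := by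
  intro h hh
  obtain ⟨_, ⟨ψ, rfl⟩, k, hk, rfl⟩ := Submodule.mem_sup.mp hh
  refine ⟨‖T ψ‖, fun φ => ?_⟩
  have hjk : ⟪j φ, k⟫_𝕜 = 0 :=
    (Submodule.mem_orthogonal _ k).mp hk (j φ) (LinearMap.mem_range_self j φ)
  rw [inner_add_right, hjk, add_zero, hT, mul_comm]
  exact norm_inner_le_norm _ _

theorem stmt10_general {H₁ H₂ : Type*}
    [NormedAddCommGroup H₁] [InnerProductSpace ℂ H₁]
    [NormedAddCommGroup H₂] [InnerProductSpace ℂ H₂] [CompleteSpace H₂]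
    (D : Submodule ℂ H₁) (j : D →ₗ[ℂ] H₂)
    (Δ : H₁ →ₗ.[ℂ] H₁)
    (hsub : ∀ φ : D, (φ : H₁) ∈ Δ.domain)
    (hform : ∀ φ : D,
      (inner ℂ ((φ : H₁)) (Δ ⟨(φ : H₁), hsub φ⟩) : ℂ) = ((‖j φ‖ ^ 2 : ℝ) : ℂ)) :
    Dense {h : H₂ | ∃ C : ℝ, ∀ φ : D, ‖(inner ℂ (j φ) h : ℂ)‖ ≤ C * ‖(φ : H₁)‖} := by
  let T : D →ₗ[ℂ] H₁ := Δ.toFun.comp (D.subtype.codRestrict Δ.domain hsub)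
  have hT := inner_eq_inner_of_inner_self_eq D.subtype T j hform
  exact (LinearMap.range j).dense_sup_orthogonal.mono
    (sup_orthogonal_range_subset_of_inner_eq D.subtype T j hT)

/-- Let `D ⊆ H₁ ∩ H₂` (a dense submodule `D` of `H₁`, with `j : D → H₂` the
`H₂`-realization), and suppose there is a selfadjoint operator `Δ` in `H₁` with `D ⊆ dom Δ`
and `⟨φ, Δφ⟩₁ = ‖φ‖₂²` for all `φ ∈ D`. Then
`D* = {h ∈ H₂ : ∃ C, |⟨φ, h⟩₂| ≤ C‖φ‖₁ for all φ ∈ D}` is dense in `H₂`. -/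
theorem stmt10 {H₁ H₂ : Type*}
    [NormedAddCommGroup H₁] [InnerProductSpace ℂ H₁] [CompleteSpace H₁]
    [NormedAddCommGroup H₂] [InnerProductSpace ℂ H₂] [CompleteSpace H₂]
    (D : Submodule ℂ H₁) (j : D →ₗ[ℂ] H₂) (hj : Function.Injective j)
    (hD : Dense (D : Set H₁))
    (Δ : H₁ →ₗ.[ℂ] H₁) (hΔdense : Dense (Δ.domain : Set H₁)) (hΔsa : Δ.adjoint = Δ)
    (hsub : ∀ φ : D, (φ : H₁) ∈ Δ.domain)
    (hform : ∀ φ : D,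
      (inner ℂ ((φ : H₁)) (Δ ⟨(φ : H₁), hsub φ⟩) : ℂ) = ((‖j φ‖ ^ 2 : ℝ) : ℂ)) :
    Dense {h : H₂ | ∃ C : ℝ, ∀ φ : D, ‖(inner ℂ (j φ) h : ℂ)‖ ≤ C * ‖(φ : H₁)‖} :=
  stmt10_general D j Δ hsub hform
end

section
/- Let (A, B) be a symmetric pair as above and L(x,y) = (By, Ax) the associated symmetric operator on K = H₁ ⊕ H₂. Then the map h ↦ (h, iB*h) is a linear isomorphism from N₋₁(A*B*) := {h ∈ dom(A*B*) : A*B*h = -h} onto the deficiency space N₋ᵢ(L*) = {ξ ∈ dom(L*) : L*ξ = -iξ}, and h ↦ (h, -iB*h) is a linear isomorphism from N₋₁(A*B*) onto N₊ᵢ(L*) = {ξ : L*ξ = iξ}. In particular, L has equal deficiency indices d₊ = d₋ = dim N₋₁(A*B*). -/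
/-!
If `L*(u, v) = μ (u, v)`, i.e. `A* v = μ u` and `B* u = μ v`, then `v = μ⁻¹ B* u` and
`A* B* u = μ² u`; conversely every `u` with `A* B* u = μ² u` yields such a pair. This is
pure algebra valid for any `μ ≠ 0`, and `μ = ∓i` gives `μ² = -1`.
-/

section SymPair

variable {H₁ H₂ : Type*}
  [NormedAddCommGroup H₁] [InnerProductSpace ℂ H₁] [CompleteSpace H₁]
  [NormedAddCommGroup H₂] [InnerProductSpace ℂ H₂] [CompleteSpace H₂]

/-- `N₋₁(A*B*) = {u ∈ dom(A*B*) : A*B*u = -u}` (a subset of `H₁`). -/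
noncomputable def NnegOne (A : H₁ →ₗ.[ℂ] H₂) (B : H₂ →ₗ.[ℂ] H₁) : Set H₁ :=
  {u | ∃ (h1 : u ∈ B.adjoint.domain) (h2 : B.adjoint ⟨u, h1⟩ ∈ A.adjoint.domain),
    A.adjoint ⟨B.adjoint ⟨u, h1⟩, h2⟩ = -u}

/-- The deficiency space `N₋ᵢ(L*) = {ξ ∈ dom(L*) : L*ξ = -iξ}`, where
`dom(L*) = dom(B*) ⊕ dom(A*)` and `L*(u, v) = (A*v, B*u)`. -/
noncomputable def NdefNeg (A : H₁ →ₗ.[ℂ] H₂) (B : H₂ →ₗ.[ℂ] H₁) : Set (H₁ × H₂) :=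
  {p | ∃ (h1 : p.1 ∈ B.adjoint.domain) (h2 : p.2 ∈ A.adjoint.domain),
    A.adjoint ⟨p.2, h2⟩ = -(Complex.I • p.1) ∧ B.adjoint ⟨p.1, h1⟩ = -(Complex.I • p.2)}

/-- The deficiency space `N₊ᵢ(L*) = {ξ ∈ dom(L*) : L*ξ = iξ}`. -/
noncomputable def NdefPos (A : H₁ →ₗ.[ℂ] H₂) (B : H₂ →ₗ.[ℂ] H₁) : Set (H₁ × H₂) :=
  {p | ∃ (h1 : p.1 ∈ B.adjoint.domain) (h2 : p.2 ∈ A.adjoint.domain),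
    A.adjoint ⟨p.2, h2⟩ = Complex.I • p.1 ∧ B.adjoint ⟨p.1, h1⟩ = Complex.I • p.2}

namespace LinearPMap

variable {𝕜 E F : Type*} [Field 𝕜] [AddCommGroup E] [Module 𝕜 E] [AddCommGroup F] [Module 𝕜 F]

theorem apply_mk_of_eq_smul (f : E →ₗ.[𝕜] F) {x y : E} (hx : x ∈ f.domain) (hy : y ∈ f.domain)
    {c : 𝕜} (h : x = c • y) : f ⟨x, hx⟩ = c • f ⟨y, hy⟩ := by
  subst h
  exact f.map_smul c ⟨y, hy⟩

noncomputable def graphSmul (S : E →ₗ.[𝕜] F) (c : 𝕜) (u : E) : E × F :=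
  open Classical in if h : u ∈ S.domain then (u, c • S ⟨u, h⟩) else (u, 0)

theorem graphSmul_of_mem (S : E →ₗ.[𝕜] F) (c : 𝕜) {u : E} (h : u ∈ S.domain) :
    graphSmul S c u = (u, c • S ⟨u, h⟩) :=
  dif_pos h

theorem fst_graphSmul (S : E →ₗ.[𝕜] F) (c : 𝕜) (u : E) : (graphSmul S c u).1 = u := by
  unfold graphSmul
  split_ifs <;> rfl

def compEigenset (S : E →ₗ.[𝕜] F) (T : F →ₗ.[𝕜] E) (μ : 𝕜) : Set E :=
  {u | ∃ (h₁ : u ∈ S.domain) (h₂ : S ⟨u, h₁⟩ ∈ T.domain), T ⟨S ⟨u, h₁⟩, h₂⟩ = μ • u}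

/-- With `S = B*`, `T = A*` this is the `μ`-eigenspace of `L*(u, v) = (A* v, B* u)`. -/
def pairEigenset (S : E →ₗ.[𝕜] F) (T : F →ₗ.[𝕜] E) (μ : 𝕜) : Set (E × F) :=
  {p | ∃ (h₁ : p.1 ∈ S.domain) (h₂ : p.2 ∈ T.domain),
    T ⟨p.2, h₂⟩ = μ • p.1 ∧ S ⟨p.1, h₁⟩ = μ • p.2}

theorem bijOn_graphSmul_compEigenset (S : E →ₗ.[𝕜] F) (T : F →ₗ.[𝕜] E) {μ : 𝕜} (hμ : μ ≠ 0) :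
    Set.BijOn (graphSmul S μ⁻¹) (compEigenset S T (μ * μ)) (pairEigenset S T μ) := by
  refine ⟨?mapsTo, ?injOn, ?surjOn⟩
  case mapsTo =>
    rintro u ⟨h₁, h₂, hTS⟩
    have hv : μ⁻¹ • S ⟨u, h₁⟩ ∈ T.domain := T.domain.smul_mem _ h₂
    rw [graphSmul_of_mem S _ h₁]
    refine ⟨h₁, hv, ?_, by rw [smul_inv_smul₀ hμ]⟩
    rw [T.apply_mk_of_eq_smul hv h₂ rfl, hTS, smul_smul, inv_mul_cancel_left₀ hμ]
  case injOn =>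
    intro u _ u' _ h
    simpa only [fst_graphSmul] using congrArg Prod.fst h
  case surjOn =>
    rintro ⟨u, v⟩ ⟨h₁, h₂, hT, hS⟩
    have hSu : S ⟨u, h₁⟩ ∈ T.domain := hS ▸ T.domain.smul_mem μ h₂
    refine ⟨u, ⟨h₁, hSu, ?_⟩, ?_⟩
    · rw [T.apply_mk_of_eq_smul hSu h₂ hS, hT, smul_smul]
    · rw [graphSmul_of_mem S _ h₁, hS, inv_smul_smul₀ hμ]

end LinearPMap

open LinearPMap

theorem NnegOne_eq_compEigenset (A : H₁ →ₗ.[ℂ] H₂) (B : H₂ →ₗ.[ℂ] H₁) :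
    NnegOne A B = compEigenset B.adjoint A.adjoint (-1) := by
  simp only [NnegOne, compEigenset, neg_one_smul]

theorem NdefNeg_eq_pairEigenset (A : H₁ →ₗ.[ℂ] H₂) (B : H₂ →ₗ.[ℂ] H₁) :
    NdefNeg A B = pairEigenset B.adjoint A.adjoint (-Complex.I) := by
  simp only [NdefNeg, pairEigenset, neg_smul]

theorem NdefPos_eq_pairEigenset (A : H₁ →ₗ.[ℂ] H₂) (B : H₂ →ₗ.[ℂ] H₁) :
    NdefPos A B = pairEigenset B.adjoint A.adjoint Complex.I :=
  rfl

theorem stmt15_general (A : H₁ →ₗ.[ℂ] H₂) (B : H₂ →ₗ.[ℂ] H₁) :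
    ∃ g g' : H₁ → H₁ × H₂,
      Set.BijOn g (NnegOne A B) (NdefNeg A B) ∧
      (∀ u (h1 : u ∈ B.adjoint.domain), u ∈ NnegOne A B →
        g u = (u, Complex.I • B.adjoint ⟨u, h1⟩)) ∧
      Set.BijOn g' (NnegOne A B) (NdefPos A B) ∧
      (∀ u (h1 : u ∈ B.adjoint.domain), u ∈ NnegOne A B →
        g' u = (u, -(Complex.I • B.adjoint ⟨u, h1⟩))) := by
  have hI : (-1 : ℂ) = Complex.I * Complex.I := Complex.I_mul_I.symm
  have hnegI : (-1 : ℂ) = -Complex.I * -Complex.I := by rw [neg_mul_neg, hI]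
  refine ⟨graphSmul B.adjoint Complex.I, graphSmul B.adjoint (-Complex.I), ?_, ?_, ?_, ?_⟩
  · rw [NnegOne_eq_compEigenset, NdefNeg_eq_pairEigenset, hnegI]
    simpa only [inv_neg, Complex.inv_I, neg_neg] using
      bijOn_graphSmul_compEigenset B.adjoint A.adjoint (neg_ne_zero.mpr Complex.I_ne_zero)
  · exact fun u h1 _ => graphSmul_of_mem _ _ h1
  · rw [NnegOne_eq_compEigenset, NdefPos_eq_pairEigenset, hI]
    simpa only [Complex.inv_I] using
      bijOn_graphSmul_compEigenset B.adjoint A.adjoint Complex.I_ne_zero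
  · exact fun u h1 _ => by rw [graphSmul_of_mem _ _ h1, neg_smul]

/-- for a symmetric pair `(A, B)` with associated operator `L(x,y) = (By, Ax)`,
the map `h ↦ (h, iB*h)` is a bijection from `N₋₁(A*B*)` onto the deficiency space
`N₋ᵢ(L*)`, and `h ↦ (h, -iB*h)` is a bijection from `N₋₁(A*B*)` onto `N₊ᵢ(L*)`.
In particular `L` has equal deficiency indices. -/
theorem stmt15 (A : H₁ →ₗ.[ℂ] H₂) (B : H₂ →ₗ.[ℂ] H₁)
    (hA : Dense (A.domain : Set H₁)) (hB : Dense (B.domain : Set H₂))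
    (hAB : ∀ (φ : A.domain) (ψ : B.domain),
      (inner ℂ (A φ) ((ψ : H₂)) : ℂ) = (inner ℂ ((φ : H₁)) (B ψ) : ℂ)) :
    ∃ g g' : H₁ → H₁ × H₂,
      Set.BijOn g (NnegOne A B) (NdefNeg A B) ∧
      (∀ u (h1 : u ∈ B.adjoint.domain), u ∈ NnegOne A B →
        g u = (u, Complex.I • B.adjoint ⟨u, h1⟩)) ∧
      Set.BijOn g' (NnegOne A B) (NdefPos A B) ∧
      (∀ u (h1 : u ∈ B.adjoint.domain), u ∈ NnegOne A B →
        g' u = (u, -(Complex.I • B.adjoint ⟨u, h1⟩))) :=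
  stmt15_general A B

end SymPair
end

section
/- Let (A, B) be a symmetric pair and L the associated symmetric operator on H₁ ⊕ H₂. Then L is essentially selfadjoint if and only if {h₁ ∈ dom(A*B*) : A*B*h₁ = -h₁} = {0}, if and only if {h₂ ∈ dom(B*A*) : B*A*h₂ = -h₂} = {0}. -/
/-!
Since `L*(u, v) = (A*v, B*u)`, a solution of `L*(u, v) = -i(u, v)` is the same thing as a
solution of `A*B*u = -u`, with `v = i B*u` (and `u = 0` forces `v = 0`). The involution
`(u, v) ↦ (u, -v)` anticommutes with `L*`, so the two deficiency spaces vanish together, and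
exchanging the roles of `A` and `B` turns `A*B*` into `B*A*`.
-/

section SymPair

variable {H₁ H₂ : Type*}
  [NormedAddCommGroup H₁] [InnerProductSpace ℂ H₁] [CompleteSpace H₁]
  [NormedAddCommGroup H₂] [InnerProductSpace ℂ H₂] [CompleteSpace H₂]

/-- `{h ∈ dom(B*A*) : B*A*h = -h}` (a subset of `H₂`). -/
noncomputable def NnegOne' (A : H₁ →ₗ.[ℂ] H₂) (B : H₂ →ₗ.[ℂ] H₁) : Set H₂ :=
  {h | ∃ (h1 : h ∈ A.adjoint.domain) (h2 : A.adjoint ⟨h, h1⟩ ∈ B.adjoint.domain),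
    B.adjoint ⟨A.adjoint ⟨h, h1⟩, h2⟩ = -h}

theorem AddEquiv.preimage_eq_singleton_zero_iff {M N : Type*} [AddZeroClass M] [AddZeroClass N]
    (e : M ≃+ N) (s : Set N) : e ⁻¹' s = {0} ↔ s = {0} := by
  rw [← e.coe_toEquiv, Equiv.preimage_eq_iff_eq_image, Set.image_singleton, e.coe_toEquiv,
    map_zero]

theorem LinearPMap.mem_graph_iff_exists {R E F : Type*} [Ring R] [AddCommGroup E] [Module R E]
    [AddCommGroup F] [Module R F] (f : E →ₗ.[R] F) {x : E} {y : F} :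
    (x, y) ∈ f.graph ↔ ∃ h : x ∈ f.domain, f ⟨x, h⟩ = y := by
  simp [LinearPMap.mem_graph_iff]

variable (A : H₁ →ₗ.[ℂ] H₂) (B : H₂ →ₗ.[ℂ] H₁)

open Complex LinearPMap

theorem mem_NnegOne_iff {u : H₁} :
    u ∈ NnegOne A B ↔ ∃ w, (u, w) ∈ B.adjoint.graph ∧ (w, -u) ∈ A.adjoint.graph := by
  simp only [NnegOne, Set.mem_ofPred_eq, mem_graph_iff_exists]
  constructor
  · rintro ⟨hu, hw, h⟩
    exact ⟨_, ⟨hu, rfl⟩, hw, h⟩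
  · rintro ⟨w, ⟨hu, rfl⟩, hw, h⟩
    exact ⟨hu, hw, h⟩

theorem mem_NdefNeg_iff {u : H₁} {v : H₂} :
    (u, v) ∈ NdefNeg A B ↔
      (v, -(I • u)) ∈ A.adjoint.graph ∧ (u, -(I • v)) ∈ B.adjoint.graph := by
  simp only [NdefNeg, Set.mem_ofPred_eq, mem_graph_iff_exists]
  exact ⟨fun ⟨hu, hv, hA, hB⟩ ↦ ⟨⟨hv, hA⟩, hu, hB⟩, fun ⟨⟨hv, hA⟩, hu, hB⟩ ↦ ⟨hu, hv, hA, hB⟩⟩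

theorem mem_NdefPos_iff {u : H₁} {v : H₂} :
    (u, v) ∈ NdefPos A B ↔ (v, I • u) ∈ A.adjoint.graph ∧ (u, I • v) ∈ B.adjoint.graph := by
  simp only [NdefPos, Set.mem_ofPred_eq, mem_graph_iff_exists]
  exact ⟨fun ⟨hu, hv, hA, hB⟩ ↦ ⟨⟨hv, hA⟩, hu, hB⟩, fun ⟨⟨hv, hA⟩, hu, hB⟩ ↦ ⟨hu, hv, hA, hB⟩⟩

theorem NnegOne_swap : NnegOne B A = NnegOne' A B := rfl

theorem NdefNeg_swap : NdefNeg B A = AddEquiv.prodComm ⁻¹' NdefNeg A B := by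
  ext ⟨v, u⟩
  simp only [Set.mem_preimage, AddEquiv.coe_prodComm, Prod.swap_prod_mk, mem_NdefNeg_iff]
  exact and_comm

theorem NdefPos_eq_preimage :
    NdefPos A B = (AddEquiv.prodCongr (AddEquiv.refl H₁) (AddEquiv.neg H₂)) ⁻¹' NdefNeg A B := by
  ext ⟨u, v⟩
  change _ ↔ (u, -v) ∈ NdefNeg A B
  rw [mem_NdefPos_iff, mem_NdefNeg_iff, ← Submodule.neg_mem_iff, Prod.neg_mk, smul_neg, neg_neg]

theorem mem_NnegOne_iff_exists_mem_NdefNeg {u : H₁} :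
    u ∈ NnegOne A B ↔ ∃ v, (u, v) ∈ NdefNeg A B := by
  simp only [mem_NnegOne_iff, mem_NdefNeg_iff]
  constructor
  · rintro ⟨w, hBu, hAw⟩
    refine ⟨I • w, by simpa using A.adjoint.graph.smul_mem I hAw, ?_⟩
    simpa [smul_smul] using hBu
  · rintro ⟨v, hAv, hBu⟩
    refine ⟨-(I • v), hBu, ?_⟩
    simpa [smul_smul] using A.adjoint.graph.smul_mem (-I) hAv

theorem eq_zero_of_mk_zero_mem_NdefNeg {v : H₂} (h : (0, v) ∈ NdefNeg A B) : v = 0 := by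
  simpa using B.adjoint.graph_fst_eq_zero_snd ((mem_NdefNeg_iff A B).1 h).2 rfl

theorem NdefNeg_eq_singleton_zero_iff : NdefNeg A B = {0} ↔ NnegOne A B = {0} := by
  simp only [Set.eq_singleton_iff_unique_mem, mem_NnegOne_iff_exists_mem_NdefNeg, Prod.forall,
    Prod.mk_eq_zero, forall_exists_index]
  constructor
  · rintro ⟨hzero, huniq⟩
    exact ⟨⟨0, hzero⟩, fun u v h ↦ (huniq u v h).1⟩
  · rintro ⟨⟨v, hv⟩, huniq⟩
    obtain rfl : v = 0 := eq_zero_of_mk_zero_mem_NdefNeg A B hv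
    refine ⟨hv, fun u v h ↦ ?_⟩
    obtain rfl : u = 0 := huniq u v h
    exact ⟨rfl, eq_zero_of_mk_zero_mem_NdefNeg A B h⟩

theorem NdefPos_eq_singleton_zero_iff : NdefPos A B = {0} ↔ NdefNeg A B = {0} := by
  rw [NdefPos_eq_preimage, AddEquiv.preimage_eq_singleton_zero_iff]

theorem NnegOne_eq_singleton_zero_iff_NnegOne' : NnegOne A B = {0} ↔ NnegOne' A B = {0} := by
  rw [← NnegOne_swap, ← NdefNeg_eq_singleton_zero_iff, ← NdefNeg_eq_singleton_zero_iff,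
    NdefNeg_swap, AddEquiv.preimage_eq_singleton_zero_iff]

theorem stmt16_general (A : H₁ →ₗ.[ℂ] H₂) (B : H₂ →ₗ.[ℂ] H₁) :
    ((NdefNeg A B = {0} ∧ NdefPos A B = {0}) ↔ NnegOne A B = {0}) ∧
    ((NdefNeg A B = {0} ∧ NdefPos A B = {0}) ↔ NnegOne' A B = {0}) := by
  rw [NdefPos_eq_singleton_zero_iff, and_self, NdefNeg_eq_singleton_zero_iff]
  exact ⟨Iff.rfl, NnegOne_eq_singleton_zero_iff_NnegOne' A B⟩

/-- for a symmetric pair `(A, B)` with associated symmetric operator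
`L(x,y) = (By, Ax)`, `L` is essentially selfadjoint (i.e. both deficiency spaces
`N±ᵢ(L*)` vanish) iff `{h₁ ∈ dom(A*B*) : A*B*h₁ = -h₁} = {0}` iff
`{h₂ ∈ dom(B*A*) : B*A*h₂ = -h₂} = {0}`. -/
theorem stmt16 (A : H₁ →ₗ.[ℂ] H₂) (B : H₂ →ₗ.[ℂ] H₁)
    (hA : Dense (A.domain : Set H₁)) (hB : Dense (B.domain : Set H₂))
    (hAB : ∀ (φ : A.domain) (ψ : B.domain),
      (inner ℂ (A φ) ((ψ : H₂)) : ℂ) = (inner ℂ ((φ : H₁)) (B ψ) : ℂ)) :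
    ((NdefNeg A B = {0} ∧ NdefPos A B = {0}) ↔ NnegOne A B = {0}) ∧
    ((NdefNeg A B = {0} ∧ NdefPos A B = {0}) ↔ NnegOne' A B = {0}) :=
  stmt16_general A B

end SymPair
end

section
/- Let A be a densely defined operator in a Hilbert space H with domain D such that ⟨φ, Aφ⟩ ≥ ‖φ‖² for all φ ∈ D. Let H_A be the completion of D under the norm ‖φ‖_A² = ⟨φ, Aφ⟩, and J : H_A → H the contractive inclusion. Then (JJ*)⁻¹ is a selfadjoint operator in H extending A, i.e., (JJ*)⁻¹φ = Aφ for all φ ∈ D. (This is the Friedrichs extension.) -/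
/-!
`T = J J*` is a bounded selfadjoint operator, injective because `⟪y, T y⟫ = ‖J* y‖²` and `J*` is
injective (the range of `J` contains the dense set `D`). Its inverse `S` has graph
`{(T y, y)}`, and `(x, z)` lies in the graph of `S*` iff `⟪y, x⟫ = ⟪T y, z⟫ = ⟪y, T z⟫` for all
`y`, i.e. iff `x = T z`; hence `S* = S`. Finally `J* (A φ) = e φ` for `φ ∈ D`, tested against the
dense set `e(D)` via `⟪e ψ, e φ⟫ = ⟪ψ, A φ⟫`, so `T (A φ) = φ`, that is `S φ = A φ`.
-/

namespace LinearPMap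

section inverse

variable {R E F : Type*} [Ring R] [AddCommGroup E] [Module R E] [AddCommGroup F] [Module R F]

theorem exists_apply_eq_of_mem_graph {f : E →ₗ.[R] F} {x : E} {y : F} (h : (x, y) ∈ f.graph) :
    ∃ hx : x ∈ f.domain, f ⟨x, hx⟩ = y :=
  ⟨mem_domain_of_mem_graph h, ((image_iff (mem_domain_of_mem_graph h)).mpr h).symm⟩

theorem inverse_toPMap_top_domain (T : E →ₗ[R] F) :
    (T.toPMap ⊤).inverse.domain = LinearMap.range T := by
  ext x
  simp [inverse_domain, LinearMap.toPMap]

theorem mem_graph_inverse_toPMap_top_iff {T : E →ₗ[R] F} (hT : Function.Injective T) {x : F}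
    {y : E} : (x, y) ∈ (T.toPMap ⊤).inverse.graph ↔ T y = x := by
  have hker : (T.toPMap ⊤).toFun.ker = ⊥ :=
    LinearMap.ker_eq_bot.mpr fun _ _ h ↦ Subtype.ext (hT h)
  simp [inverse_graph hker]

end inverse

section Hilbert

variable {𝕜 E : Type*} [RCLike 𝕜] [NormedAddCommGroup E] [InnerProductSpace 𝕜 E] [CompleteSpace E]
  {T : E →L[𝕜] E}

theorem dense_inverse_toPMap_top_domain (hT : IsSelfAdjoint T) (hinj : Function.Injective T) :
    Dense (((T : E →ₗ[𝕜] E).toPMap ⊤).inverse.domain : Set E) := by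
  rw [inverse_toPMap_top_domain, Submodule.dense_iff_topologicalClosure_eq_top,
    Submodule.topologicalClosure_eq_top_iff]
  have horth := T.orthogonal_range
  rw [hT.adjoint_eq] at horth
  simpa [horth, LinearMap.ker_eq_bot] using hinj

theorem adjoint_inverse_toPMap_top (hT : IsSelfAdjoint T) (hinj : Function.Injective T) :
    ((T : E →ₗ[𝕜] E).toPMap ⊤).inverse.adjoint = ((T : E →ₗ[𝕜] E).toPMap ⊤).inverse := by
  apply eq_of_eq_graph
  rw [adjoint_graph_eq_graph_adjoint (dense_inverse_toPMap_top_domain hT hinj)]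
  ext ⟨x, z⟩
  have hsymm := ContinuousLinearMap.isSelfAdjoint_iff_isSymmetric.mp hT
  simp only [Submodule.mem_adjoint_iff, mem_graph_inverse_toPMap_top_iff hinj, sub_eq_zero]
  constructor
  · intro h
    exact (ext_inner_left 𝕜 fun b ↦ (h (T b) b rfl).trans (hsymm b z)).symm
  · rintro rfl _ b rfl
    exact (hsymm b z).symm

end Hilbert

end LinearPMap

namespace ContinuousLinearMap

variable {𝕜 E F : Type*} [RCLike 𝕜] [NormedAddCommGroup E] [InnerProductSpace 𝕜 E]
  [CompleteSpace E] [NormedAddCommGroup F] [InnerProductSpace 𝕜 F] [CompleteSpace F]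

theorem injective_adjoint_of_denseRange {J : F →L[𝕜] E} (hJ : DenseRange J) :
    Function.Injective (adjoint J) := by
  rw [← coe_coe, ← LinearMap.ker_eq_bot, ← J.orthogonal_range,
    ← Submodule.topologicalClosure_eq_top_iff, ← Submodule.dense_iff_topologicalClosure_eq_top]
  exact hJ

end ContinuousLinearMap

open LinearPMap ContinuousLinearMap in
theorem stmt17_general {H HA : Type*}
    [NormedAddCommGroup H] [InnerProductSpace ℂ H] [CompleteSpace H]
    [NormedAddCommGroup HA] [InnerProductSpace ℂ HA] [CompleteSpace HA]
    (A : H →ₗ.[ℂ] H) (hA : Dense (A.domain : Set H))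
    (e : A.domain →ₗ[ℂ] HA) (he : Dense (Set.range e))
    (hinner : ∀ φ ψ : A.domain,
      (inner ℂ (e φ) (e ψ) : ℂ) = (inner ℂ ((φ : H)) (A ψ) : ℂ))
    (J : HA →L[ℂ] H) (hJ : ∀ φ : A.domain, J (e φ) = (φ : H)) :
    ∃ S : H →ₗ.[ℂ] H, Dense (S.domain : Set H) ∧ S.adjoint = S ∧
      (∀ y : H, ∃ hy : J (ContinuousLinearMap.adjoint J y) ∈ S.domain,
        S ⟨J (ContinuousLinearMap.adjoint J y), hy⟩ = y) ∧
      (∀ x : S.domain, J (ContinuousLinearMap.adjoint J (S x)) = (x : H)) ∧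
      (∀ φ : A.domain, ∃ h : (φ : H) ∈ S.domain, S ⟨(φ : H), h⟩ = A φ) := by
  set T := J ∘L adjoint J
  have hT : IsSelfAdjoint T := (isPositive_self_comp_adjoint J).isSelfAdjoint
  have hJ_dense : DenseRange J := hA.mono fun φ hφ ↦ ⟨e ⟨φ, hφ⟩, hJ _⟩
  have hinj : Function.Injective T :=
    (self_comp_adjoint_injective_iff J).mpr (injective_adjoint_of_denseRange hJ_dense)
  set S := ((T : H →ₗ[ℂ] H).toPMap ⊤).inverse
  have hgraph : ∀ {x y : H}, (x, y) ∈ S.graph ↔ T y = x := mem_graph_inverse_toPMap_top_iff hinj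
  have hadjA : ∀ φ : A.domain, adjoint J (A φ) = e φ := fun φ ↦
    he.eq_of_inner_right ℂ <| by
      rintro _ ⟨ψ, rfl⟩
      rw [adjoint_inner_right, hJ, hinner]
  refine ⟨S, dense_inverse_toPMap_top_domain hT hinj,
    adjoint_inverse_toPMap_top hT hinj, fun y ↦ exists_apply_eq_of_mem_graph (hgraph.mpr rfl),
    fun x ↦ hgraph.mp (mem_graph _ x), fun φ ↦ exists_apply_eq_of_mem_graph (hgraph.mpr ?_)⟩
  change J (adjoint J (A φ)) = φ
  rw [hadjA, hJ]

/-- Friedrichs extension: Let `A` be densely defined in `H` with domain `D`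
and `⟨φ, Aφ⟩ ≥ ‖φ‖²` on `D`. Let `H_A` be the completion of `D` under
`⟨f, g⟩_A = ⟨f, Ag⟩` (abstractly: a Hilbert space `HA` with a linear map `e : D → HA` having
dense range and `⟨e φ, e ψ⟩_A = ⟨φ, Aψ⟩`), and let `J : H_A → H` be the contractive
inclusion (`J(e φ) = φ`, `‖Jv‖ ≤ ‖v‖`). Then `(JJ*)⁻¹` is a selfadjoint operator in `H`
extending `A`: there is a selfadjoint `S` with `dense domain`, `S = (JJ*)⁻¹` (i.e.
`JJ* ∘ S = id` on `dom S` and `S ∘ JJ* = id` with `ran(JJ*) = dom S`), and `Sφ = Aφ` on `D`. -/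
theorem stmt17 {H HA : Type*}
    [NormedAddCommGroup H] [InnerProductSpace ℂ H] [CompleteSpace H]
    [NormedAddCommGroup HA] [InnerProductSpace ℂ HA] [CompleteSpace HA]
    (A : H →ₗ.[ℂ] H) (hA : Dense (A.domain : Set H))
    (hpos : ∀ φ : A.domain, (‖(φ : H)‖ : ℝ) ^ 2 ≤ ((inner ℂ ((φ : H)) (A φ) : ℂ)).re)
    (e : A.domain →ₗ[ℂ] HA) (he : Dense (Set.range e))
    (hinner : ∀ φ ψ : A.domain,
      (inner ℂ (e φ) (e ψ) : ℂ) = (inner ℂ ((φ : H)) (A ψ) : ℂ))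
    (J : HA →L[ℂ] H) (hJ : ∀ φ : A.domain, J (e φ) = (φ : H))
    (hJcontr : ∀ v : HA, ‖J v‖ ≤ ‖v‖) :
    ∃ S : H →ₗ.[ℂ] H, Dense (S.domain : Set H) ∧ S.adjoint = S ∧
      (∀ y : H, ∃ hy : J (ContinuousLinearMap.adjoint J y) ∈ S.domain,
        S ⟨J (ContinuousLinearMap.adjoint J y), hy⟩ = y) ∧
      (∀ x : S.domain, J (ContinuousLinearMap.adjoint J (S x)) = (x : H)) ∧
      (∀ φ : A.domain, ∃ h : (φ : H) ∈ S.domain, S ⟨(φ : H), h⟩ = A φ) :=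
  stmt17_general A hA e he hinner J hJ
end
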